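/- Let a, b, c, d > 0, θ := √((a+c+bd)² − 4abd), x₀ := (a+c+bd−θ)/(2b) and y₀ := (a+c−bd+θ)/(2d). Then the Jacobian matrix of the system (NOPO) at (x₀, y₀), namely J = [[−b−y₀, −x₀], [y₀, x₀−d]], satisfies det J = b(d−x₀) + d·y₀ > 0 and trace J = −b − y₀ − (d − x₀) < 0; consequently every complex eigenvalue of J has negative real part. -/

import Mathlib

/-!
At the equilibrium `ẏ = 0` reads `y₀ (d − x₀) = c`, and `y₀ > 0` because
`θ² = (a + c − bd)² + 4bcd > (bd − a − c)²`; hence `d − x₀ > 0`. Then every term of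
`det J = b(d − x₀) + d y₀` is positive and every term of `trace J = −b − y₀ − (d − x₀)` is
negative. The eigenvalues of a real `2 × 2` matrix are the roots of `z² − (trace J) z + det J`,
and such a root with positive constant term and positive linear coefficient `−trace J`
lies in the open left half-plane.
-/

open Polynomial

theorem Complex.re_neg_of_sq_sub_mul_add_eq_zero {t D : ℝ} (ht : t < 0) (hD : 0 < D) {z : ℂ}
    (hz : z ^ 2 - t * z + D = 0) : z.re < 0 := by
  have hre : z.re ^ 2 - z.im ^ 2 - t * z.re + D = 0 := by
    simpa [pow_two] using congrArg Complex.re hz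
  have him : z.im * (2 * z.re - t) = 0 := by
    have := congrArg Complex.im hz
    simp only [pow_two, sub_im, add_im, mul_im, ofReal_re, ofReal_im, zero_im] at this
    linear_combination this
  rcases mul_eq_zero.mp him with h | h
  · rw [h] at hre
    nlinarith
  · linarith

theorem Matrix.re_neg_of_mem_spectrum_map_ofReal {A : Matrix (Fin 2) (Fin 2) ℝ}
    (hdet : 0 < A.det) (htr : A.trace < 0) :
    ∀ μ ∈ spectrum ℂ (A.map Complex.ofReal), μ.re < 0 := by
  intro μ hμ
  rw [mem_spectrum_iff_isRoot_charpoly,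
    show A.map Complex.ofReal = A.map Complex.ofRealHom from rfl, charpoly_map, charpoly_fin_two] at hμ
  refine Complex.re_neg_of_sq_sub_mul_add_eq_zero htr hdet ?_
  simpa using hμ.eq_zero

theorem nopo_discriminant_eq (a b c d : ℝ) :
    (a + c + b * d) ^ 2 - 4 * a * b * d = (a + c - b * d) ^ 2 + 4 * b * c * d := by
  ring

theorem nopo_equilibrium_ydot_eq_zero {a b c d θ : ℝ} (hb : b ≠ 0) (hd : d ≠ 0)
    (hθ : θ ^ 2 = (a + c + b * d) ^ 2 - 4 * a * b * d) :
    let x₀ := (a + c + b * d - θ) / (2 * b)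
    let y₀ := (a + c - b * d + θ) / (2 * d)
    c - d * y₀ + x₀ * y₀ = 0 := by
  intro x₀ y₀
  simp only [x₀, y₀]
  field_simp
  linear_combination -hθ

theorem stmt_2 (a b c d : ℝ) (hb : 0 < b) (hc : 0 < c) (hd : 0 < d) :
    let θ := Real.sqrt ((a + c + b * d) ^ 2 - 4 * a * b * d)
    let x₀ := (a + c + b * d - θ) / (2 * b)
    let y₀ := (a + c - b * d + θ) / (2 * d)
    let J : Matrix (Fin 2) (Fin 2) ℝ := !![-b - y₀, -x₀; y₀, x₀ - d]
    J.det = b * (d - x₀) + d * y₀ ∧ 0 < J.det ∧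
    J.trace = -b - y₀ - (d - x₀) ∧ J.trace < 0 ∧
    ∀ μ ∈ spectrum ℂ (J.map Complex.ofReal), μ.re < 0 := by
  intro θ x₀ y₀ J
  have hdisc : 0 < (a + c + b * d) ^ 2 - 4 * a * b * d := by
    rw [nopo_discriminant_eq]; positivity
  have hθ : b * d - a - c < θ := by
    refine lt_of_abs_lt (Real.lt_sqrt_of_sq_lt ?_)
    rw [sq_abs, nopo_discriminant_eq]
    nlinarith [mul_pos (mul_pos hb hc) hd]
  have hy : 0 < y₀ := div_pos (by linarith) (by positivity)
  have hy_mul : y₀ * (d - x₀) = c := by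
    linear_combination -nopo_equilibrium_ydot_eq_zero hb.ne' hd.ne' (Real.sq_sqrt hdisc.le)
  have hdx : 0 < d - x₀ := pos_of_mul_pos_right (hy_mul ▸ hc) hy.le
  have hdet : J.det = b * (d - x₀) + d * y₀ := by
    rw [Matrix.det_fin_two_of]; ring
  have htr : J.trace = -b - y₀ - (d - x₀) := by
    rw [Matrix.trace_fin_two_of]; ring
  have hdet_pos : 0 < J.det := by rw [hdet]; positivity
  have htr_neg : J.trace < 0 := by rw [htr]; linarith
  exact ⟨hdet, hdet_pos, htr, htr_neg, Matrix.re_neg_of_mem_spectrum_map_ofReal hdet_pos htr_neg⟩
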